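/- Let m ≥ 1, let I be an infinite set, let E₁,…,E_m be real Banach spaces, let 1 ≤ q ≤ ∞, let r, t ∈ [1,∞), let s = (s₁,…,s_m), u = (u₁,…,u_m) ∈ [1,∞)^m, and let Λ ⊆ Γ ⊆ ℕ^m be nonempty index sets. Let D be the set of continuous m-linear operators T : E₁ × ⋯ × E_m → ℓ_q(I) that are Λ-(r;s)-summing but not Γ-(t;u)-summing. If D is nonempty, then there exists a linear subspace W of the space of continuous m-linear operators E₁ × ⋯ × E_m → ℓ_q(I) with W ⊆ D ∪ {0} and with linear dimension equal to the cardinality of I. -/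

import Mathlib

open Filter Topology ENNReal

noncomputable section

variable {m : ℕ} {E : Fin m → Type*} [∀ k, NormedAddCommGroup (E k)]
  [∀ k, NormedSpace ℝ (E k)] {F : Type*} [NormedAddCommGroup F] [NormedSpace ℝ F]

open Classical in
/-- The set of admissible constants `C > 0` in the defining inequality of a
`Λ`-`(r; s)`-summing continuous `m`-linear operator. -/
def lambdaSummingConsts (Λ : Set (Fin m → ℕ)) (r : ℝ) (s : Fin m → ℝ)
    (T : ContinuousMultilinearMap ℝ E F) : Set ℝ :=
  {C : ℝ | 0 < C ∧ ∀ (N : ℕ) (x : (k : Fin m) → ℕ → E k),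
    (∑ i ∈ (Fintype.piFinset fun _ => Finset.range N).filter (fun i => i ∈ Λ),
        ‖T (fun k => x k (i k))‖ ^ r) ^ (1 / r)
      ≤ C * ∏ k, ⨆ φ : {φ : E k →L[ℝ] ℝ // ‖φ‖ ≤ 1},
          (∑ j ∈ Finset.range N, |φ.1 (x k j)| ^ s k) ^ (1 / s k)}

/-- A continuous `m`-linear operator is `Λ`-`(r; s)`-summing if some `C > 0` is admissible. -/
def IsLambdaSumming (Λ : Set (Fin m → ℕ)) (r : ℝ) (s : Fin m → ℝ)
    (T : ContinuousMultilinearMap ℝ E F) : Prop :=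
  (lambdaSummingConsts Λ r s T).Nonempty

/-- The summing norm `π^Λ_{(r;s)}`: the infimum of the admissible constants. -/
def lambdaPi (Λ : Set (Fin m → ℕ)) (r : ℝ) (s : Fin m → ℝ)
    (T : ContinuousMultilinearMap ℝ E F) : ℝ :=
  sInf (lambdaSummingConsts Λ r s T)

universe v

/-! Let `T` be `Λ`-`(r;s)`-summing but not `Γ`-`(t;u)`-summing and fix a bijection
`e : I × I ≃ I`. Extension by zero along the slices `e (i, ·)` gives isometric copies `J i` of
`ℓ_q(I)` inside `ℓ_q(I)` with disjoint supports, and restriction `P i₀` to the `i₀`-th slice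
reads off one coefficient: `P i₀ (∑ c i • J i y) = c i₀ • y`. So if `c i₀ ≠ 0`, the operator
`L = ∑ c i • J i` is bounded and has the bounded left inverse `(c i₀)⁻¹ • P i₀`; hence `L ∘ T`
is still `Λ`-`(r;s)`-summing, and it is not `Γ`-`(t;u)`-summing because `T` is recovered from it
by composing with that left inverse. As the zero operator is summing, this also makes the
`J i ∘ T` linearly independent, and they span the required subspace. -/

open Function

namespace Memℓp

variable {α β V : Type*} [NormedAddCommGroup V] {p : ℝ≥0∞} {j : α → β}

theorem comp_injective {g : β → V} (hg : Memℓp g p) (hj : Injective j) :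
    Memℓp (g ∘ j) p := by
  obtain (rfl | rfl | hp) := p.trichotomy
  · exact memℓp_zero (hg.finite_dsupport.preimage hj.injOn)
  · exact memℓp_infty (hg.bddAbove.mono (Set.range_comp_subset_range j fun b => ‖g b‖))
  · exact memℓp_gen ((hg.summable hp).comp_injective hj)

theorem extend_zero {f : α → V} (hf : Memℓp f p) (hj : Injective j) :
    Memℓp (extend j f 0) p := by
  obtain (rfl | rfl | hp) := p.trichotomy
  · refine memℓp_zero ?_
    rw [← support, support_extend_zero hj]
    exact hf.finite_dsupport.image j
  · refine memℓp_infty ((hf.bddAbove.insert 0).mono ?_)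
    rintro _ ⟨b, rfl⟩
    by_cases hb : ∃ a, j a = b
    · obtain ⟨a, rfl⟩ := hb
      simp [hj.extend_apply]
    · simp [extend_apply' _ _ _ hb]
  · refine memℓp_gen ((hj.summable_iff fun b hb => ?_).mp ?_)
    · simp [extend_apply' _ _ _ (by simpa using hb), Real.zero_rpow hp.ne']
    · simpa [comp_def, hj.extend_apply] using hf.summable hp

end Memℓp

namespace lp

variable {α β ι : Type*} {p : ℝ≥0∞} {j : α → β}

theorem norm_le_of_injective {E₁ : α → Type*} {E₂ : β → Type*} [∀ a, NormedAddCommGroup (E₁ a)]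
    [∀ b, NormedAddCommGroup (E₂ b)] (hp : p ≠ 0) (hj : Injective j) {x : lp E₁ p} {y : lp E₂ p}
    (h : ∀ a, ‖x a‖ ≤ ‖y (j a)‖) : ‖x‖ ≤ ‖y‖ := by
  obtain (rfl | rfl | hp) := p.trichotomy
  · exact absurd rfl hp
  · exact norm_le_of_forall_le (norm_nonneg' y) fun a => (h a).trans (norm_apply_le_norm hp y _)
  · refine norm_le_of_forall_sum_le hp (norm_nonneg' y) fun s => ?_
    calc ∑ a ∈ s, ‖x a‖ ^ p.toReal ≤ ∑ a ∈ s, ‖y (j a)‖ ^ p.toReal := by gcongr with a; exact h a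
      _ = ∑ b ∈ s.map ⟨j, hj⟩, ‖y b‖ ^ p.toReal := by simp
      _ ≤ ‖y‖ ^ p.toReal := sum_rpow_le_norm_rpow hp y _

theorem norm_le_of_eq_zero_off_range {E₁ : β → Type*} {E₂ : α → Type*}
    [∀ b, NormedAddCommGroup (E₁ b)] [∀ a, NormedAddCommGroup (E₂ a)] (hp : p ≠ 0)
    (hj : Injective j) {x : lp E₁ p} {y : lp E₂ p}
    (h₀ : ∀ b ∉ Set.range j, x b = 0) (h : ∀ a, ‖x (j a)‖ ≤ ‖y a‖) : ‖x‖ ≤ ‖y‖ := by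
  obtain (rfl | rfl | hp) := p.trichotomy
  · exact absurd rfl hp
  · refine norm_le_of_forall_le (norm_nonneg' y) fun b => ?_
    by_cases hb : b ∈ Set.range j
    · obtain ⟨a, rfl⟩ := hb
      exact (h a).trans (norm_apply_le_norm hp y _)
    · simp [h₀ b hb, norm_nonneg' y]
  · refine norm_le_of_forall_sum_le hp (norm_nonneg' y) fun s => ?_
    calc ∑ b ∈ s, ‖x b‖ ^ p.toReal = ∑ a ∈ s.preimage j hj.injOn, ‖x (j a)‖ ^ p.toReal :=
          (Finset.sum_preimage j s hj.injOn _ fun b _ hb => by simp [h₀ b hb, hp.ne']).symm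
      _ ≤ ∑ a ∈ s.preimage j hj.injOn, ‖y a‖ ^ p.toReal := by gcongr with a; exact h a
      _ ≤ ‖y‖ ^ p.toReal := sum_rpow_le_norm_rpow hp y _

variable {𝕜 V : Type*} [NormedField 𝕜] [NormedAddCommGroup V] [NormedSpace 𝕜 V] [Fact (1 ≤ p)]

variable (𝕜) in
def funLeft {j : α → β} (hj : Injective j) : lp (fun _ : β => V) p →L[𝕜] lp (fun _ : α => V) p :=
  LinearMap.mkContinuous
    { toFun g := ⟨g ∘ j, (lp.memℓp g).comp_injective hj⟩
      map_add' _ _ := rfl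
      map_smul' _ _ := rfl }
    1 fun g => by
      rw [one_mul]
      exact norm_le_of_injective (zero_lt_one.trans_le Fact.out).ne' hj
        (x := (⟨g ∘ j, (lp.memℓp g).comp_injective hj⟩ : lp (fun _ : α => V) p)) fun _ => le_rfl

variable (𝕜) in
def extendByZero {j : α → β} (hj : Injective j) :
    lp (fun _ : α => V) p →L[𝕜] lp (fun _ : β => V) p :=
  LinearMap.mkContinuous
    { toFun f := ⟨extend j f 0, (lp.memℓp f).extend_zero hj⟩
      map_add' f g := lp.ext <| by
        change extend j ⇑(f + g) 0 = extend j ⇑f 0 + extend j ⇑g 0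
        rw [lp.coeFn_add, ← extend_add, add_zero]
      map_smul' c f := lp.ext <| by
        change extend j ⇑(c • f) 0 = c • extend j ⇑f 0
        rw [lp.coeFn_smul, ← extend_smul, smul_zero] }
    1 fun f => by
      rw [one_mul]
      exact norm_le_of_eq_zero_off_range (zero_lt_one.trans_le Fact.out).ne' hj
        (x := (⟨extend j f 0, (lp.memℓp f).extend_zero hj⟩ : lp (fun _ : β => V) p))
        (fun b hb => extend_apply' _ _ _ (by simpa using hb))
        fun a => (congrArg (‖·‖) (hj.extend_apply _ _ a)).le

theorem extendByZero_apply_self {j : α → β} (hj : Injective j) (f : lp (fun _ : α => V) p) (a : α) :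
    extendByZero 𝕜 hj f (j a) = f a :=
  hj.extend_apply _ _ _

theorem extendByZero_apply_of_notMem_range {j : α → β} (hj : Injective j)
    (f : lp (fun _ : α => V) p) {b : β} (hb : b ∉ Set.range j) : extendByZero 𝕜 hj f b = 0 :=
  extend_apply' _ _ _ (by simpa using hb)

theorem funLeft_extendByZero_self {j : α → β} (hj : Injective j) (f : lp (fun _ : α => V) p) :
    funLeft 𝕜 hj (extendByZero 𝕜 hj f) = f :=
  lp.ext <| funext fun a => extendByZero_apply_self (𝕜 := 𝕜) hj f a

theorem funLeft_extendByZero_of_disjoint {j j' : α → β} (hj : Injective j) (hj' : Injective j')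
    (h : Disjoint (Set.range j) (Set.range j')) (f : lp (fun _ : α => V) p) :
    funLeft 𝕜 hj' (extendByZero 𝕜 hj f) = 0 :=
  lp.ext <| funext fun a =>
    extendByZero_apply_of_notMem_range (𝕜 := 𝕜) hj f (h.notMem_of_mem_right ⟨a, rfl⟩)

theorem funLeft_linearCombination_extendByZero {j : ι × α → β} (hj : Injective j) (i₀ : ι)
    (c : ι →₀ 𝕜) (f : lp (fun _ : α => V) p) :
    funLeft 𝕜 (hj.comp (Prod.mk_right_injective i₀)) (Finsupp.linearCombination 𝕜
      (fun i => extendByZero 𝕜 (hj.comp (Prod.mk_right_injective i))) c f) = c i₀ • f := by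
  have hdisj {i} (hi : i ≠ i₀) :
      Disjoint (Set.range fun a => j (i, a)) (Set.range fun a => j (i₀, a)) :=
    Set.disjoint_range_iff.2 fun a a' h => hi (congrArg Prod.fst (hj h))
  simp only [Finsupp.linearCombination_apply, Finsupp.sum, sum_apply, smul_apply, map_sum,
    map_smul]
  rw [Finset.sum_eq_single i₀
    (fun i _ hi => by rw [funLeft_extendByZero_of_disjoint _ _ (hdisj hi), smul_zero])
    (fun h => by rw [Finsupp.notMem_support_iff.mp h, zero_smul]), funLeft_extendByZero_self]

end lp

section Summing

variable {G : Type*} [NormedAddCommGroup G] [NormedSpace ℝ G]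
  {Λ : Set (Fin m → ℕ)} {r : ℝ} {s : Fin m → ℝ}

theorem isLambdaSumming_zero (hr : 0 < r) :
    IsLambdaSumming Λ r s (0 : ContinuousMultilinearMap ℝ E F) := by
  refine ⟨1, one_pos, fun N x => ?_⟩
  simp only [zero_apply, norm_zero, Real.zero_rpow hr.ne', Finset.sum_const_zero,
    Real.zero_rpow (one_div_pos.2 hr).ne', one_mul]
  exact Finset.prod_nonneg fun k _ => Real.iSup_nonneg fun φ => by positivity

theorem IsLambdaSumming.of_norm_le (hr : 0 < r) {T : ContinuousMultilinearMap ℝ E F}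
    (hT : IsLambdaSumming Λ r s T) {T' : ContinuousMultilinearMap ℝ E G} {c : ℝ} (hc : 0 < c)
    (h : ∀ x, ‖T' x‖ ≤ c * ‖T x‖) : IsLambdaSumming Λ r s T' := by
  classical
  obtain ⟨C, hC, hTC⟩ := hT
  refine ⟨c * C, by positivity, fun N x => ?_⟩
  set S := (Fintype.piFinset fun _ => Finset.range N).filter (· ∈ Λ)
  calc (∑ i ∈ S, ‖T' (fun k => x k (i k))‖ ^ r) ^ (1 / r)
      ≤ (∑ i ∈ S, (c * ‖T (fun k => x k (i k))‖) ^ r) ^ (1 / r) := by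
        gcongr with i
        exact h _
    _ = c * (∑ i ∈ S, ‖T (fun k => x k (i k))‖ ^ r) ^ (1 / r) := by
        simp_rw [Real.mul_rpow hc.le (norm_nonneg _), ← Finset.mul_sum]
        rw [Real.mul_rpow (by positivity) (by positivity), one_div, Real.rpow_rpow_inv hc.le hr.ne']
    _ ≤ c * C * _ := by
        rw [mul_assoc]
        exact mul_le_mul_of_nonneg_left (hTC N x) hc.le

theorem IsLambdaSumming.compContinuousMultilinearMap (hr : 0 < r)
    {T : ContinuousMultilinearMap ℝ E F} (hT : IsLambdaSumming Λ r s T) (L : F →L[ℝ] G) :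
    IsLambdaSumming Λ r s (L.compContinuousMultilinearMap T) :=
  hT.of_norm_le hr (by positivity : 0 < ‖L‖ + 1) fun x =>
    (L.le_opNorm (T x)).trans (by gcongr; linarith)

theorem not_isLambdaSumming_compContinuousMultilinearMap (hr : 0 < r)
    {T : ContinuousMultilinearMap ℝ E F} (hT : ¬ IsLambdaSumming Λ r s T) {L : F →L[ℝ] G}
    (P : G →L[ℝ] F) (hPL : ∀ y, P (L y) = y) :
    ¬ IsLambdaSumming Λ r s (L.compContinuousMultilinearMap T) := fun hLT => hT <| by
  have hPLT : P.compContinuousMultilinearMap (L.compContinuousMultilinearMap T) = T := by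
    ext x
    simp [hPL]
  exact hPLT ▸ hLT.compContinuousMultilinearMap hr P

end Summing

theorem exists_submodule_rank_eq_of_linearCombination_mem {R : Type*} {ι M : Type v} [Ring R]
    [StrongRankCondition R] [AddCommGroup M] [Module R M] (v : ι → M) {D : Set M} (h0 : 0 ∉ D)
    (hv : ∀ c : ι →₀ R, c ≠ 0 → Finsupp.linearCombination R v c ∈ D) :
    ∃ W : Submodule R M, (W : Set M) ⊆ D ∪ {0} ∧ Module.rank R W = Cardinal.mk ι := by
  have hli : LinearIndependent R v :=
    linearIndependent_iff.2 fun c hc => by_contra fun hne => h0 (hc ▸ hv c hne)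
  refine ⟨Submodule.span R (Set.range v), fun x hx => ?_, ?_⟩
  · rw [SetLike.mem_coe, ← Finsupp.range_linearCombination] at hx
    obtain ⟨c, rfl⟩ := hx
    rcases eq_or_ne c 0 with rfl | hc
    · exact Or.inr (map_zero _)
    · exact Or.inl (hv c hc)
  · have := nontrivial_of_invariantBasisNumber R
    rw [rank_span hli, Cardinal.mk_range_eq v hli.injective]

section Blocks

variable {α β ι V : Type*} [NormedAddCommGroup V] [NormedSpace ℝ V] {q : ℝ≥0∞} [Fact (1 ≤ q)]
  {Λ Γ : Set (Fin m → ℕ)} {r t : ℝ} {s u : Fin m → ℝ} {j : ι × α → β}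

def blockCopy (hj : Injective j) (T : ContinuousMultilinearMap ℝ E (lp (fun _ : α => V) q))
    (i : ι) : ContinuousMultilinearMap ℝ E (lp (fun _ : β => V) q) :=
  (lp.extendByZero ℝ (hj.comp (Prod.mk_right_injective i))).compContinuousMultilinearMap T

theorem linearCombination_blockCopy (hj : Injective j)
    (T : ContinuousMultilinearMap ℝ E (lp (fun _ : α => V) q)) (c : ι →₀ ℝ) :
    Finsupp.linearCombination ℝ (blockCopy hj T) c =
      (Finsupp.linearCombination ℝ
        (fun i => lp.extendByZero ℝ (hj.comp (Prod.mk_right_injective i))) c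
        ).compContinuousMultilinearMap T := by
  ext x
  simp [blockCopy, Finsupp.linearCombination_apply, Finsupp.sum]

theorem linearCombination_blockCopy_mem (hr : 0 < r) (ht : 0 < t)
    {T : ContinuousMultilinearMap ℝ E (lp (fun _ : α => V) q)}
    (hTΛ : IsLambdaSumming Λ r s T) (hTΓ : ¬ IsLambdaSumming Γ t u T) (hj : Injective j)
    {c : ι →₀ ℝ} (hc : c ≠ 0) :
    IsLambdaSumming Λ r s (Finsupp.linearCombination ℝ (blockCopy hj T) c) ∧
      ¬ IsLambdaSumming Γ t u (Finsupp.linearCombination ℝ (blockCopy hj T) c) := by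
  obtain ⟨i₀, hi₀⟩ := Finsupp.ne_iff.1 hc
  rw [linearCombination_blockCopy]
  refine ⟨hTΛ.compContinuousMultilinearMap hr _,
    not_isLambdaSumming_compContinuousMultilinearMap ht hTΓ
      ((c i₀)⁻¹ • lp.funLeft ℝ (hj.comp (Prod.mk_right_injective i₀))) fun y => ?_⟩
  rw [smul_apply, lp.funLeft_linearCombination_extendByZero hj, inv_smul_smul₀ hi₀]

end Blocks

theorem stmt9_general {m : ℕ} (I : Type v) [Infinite I]
    (E : Fin m → Type v)
    [∀ k, NormedAddCommGroup (E k)] [∀ k, NormedSpace ℝ (E k)]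
    (q : ℝ≥0∞) [Fact (1 ≤ q)]
    (r t : ℝ) (hr : 1 ≤ r) (ht : 1 ≤ t)
    (s u : Fin m → ℝ)
    (Λ Γ : Set (Fin m → ℕ))
    (D : Set (ContinuousMultilinearMap ℝ E (lp (fun _ : I => ℝ) q)))
    (hD : D = {T | IsLambdaSumming Λ r s T ∧ ¬ IsLambdaSumming Γ t u T})
    (hDne : D.Nonempty) :
    ∃ W : Submodule ℝ (ContinuousMultilinearMap ℝ E (lp (fun _ : I => ℝ) q)),
      (W : Set (ContinuousMultilinearMap ℝ E (lp (fun _ : I => ℝ) q))) ⊆ D ∪ {0} ∧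
      Module.rank ℝ W = Cardinal.mk I := by
  subst hD
  obtain ⟨T, hTΛ, hTΓ⟩ := hDne
  obtain ⟨e⟩ : Nonempty (I × I ≃ I) := Cardinal.eq.1 <| by
    rw [Cardinal.mk_prod, Cardinal.lift_id, Cardinal.mul_eq_self (Cardinal.aleph0_le_mk I)]
  exact exists_submodule_rank_eq_of_linearCombination_mem (blockCopy e.injective T)
    (D := {T | IsLambdaSumming Λ r s T ∧ ¬ IsLambdaSumming Γ t u T})
    (fun h0 => h0.2 (isLambdaSumming_zero (by linarith)))
    fun c hc => linearCombination_blockCopy_mem (by linarith) (by linarith) hTΛ hTΓ e.injective hc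

theorem stmt9 {m : ℕ} (hm : 1 ≤ m) (I : Type v) [Infinite I]
    (E : Fin m → Type v)
    [∀ k, NormedAddCommGroup (E k)] [∀ k, NormedSpace ℝ (E k)] [∀ k, CompleteSpace (E k)]
    (q : ℝ≥0∞) [Fact (1 ≤ q)]
    (r t : ℝ) (hr : 1 ≤ r) (ht : 1 ≤ t)
    (s u : Fin m → ℝ) (hs : ∀ k, 1 ≤ s k) (hu : ∀ k, 1 ≤ u k)
    (Λ Γ : Set (Fin m → ℕ)) (hΛ : Λ.Nonempty) (hΓ : Γ.Nonempty) (hΛΓ : Λ ⊆ Γ)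
    (D : Set (ContinuousMultilinearMap ℝ E (lp (fun _ : I => ℝ) q)))
    (hD : D = {T | IsLambdaSumming Λ r s T ∧ ¬ IsLambdaSumming Γ t u T})
    (hDne : D.Nonempty) :
    ∃ W : Submodule ℝ (ContinuousMultilinearMap ℝ E (lp (fun _ : I => ℝ) q)),
      (W : Set (ContinuousMultilinearMap ℝ E (lp (fun _ : I => ℝ) q))) ⊆ D ∪ {0} ∧
      Module.rank ℝ W = Cardinal.mk I :=
  stmt9_general I E q r t hr ht s u Λ Γ D hD hDne
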